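/- Let X be a real Banach space, 1 < α ≤ 2, M ≥ 1, ω ≥ 0. Let T, B : [0,∞) → L(X) be strongly continuous with ‖T(t)‖ ≤ M·e^(ωt)·t^(α−1)/Γ(α), and let f : [0,∞) → X be continuous. Define w₀(t) = ∫₀ᵗ T(t−s) f(s) ds and w_n(t) = ∫₀ᵗ T(t−s) B(s) w_{n−1}(s) ds for n ≥ 1. Then for every n ∈ ℕ and t ≥ 0, setting K_t = sup_{0≤s≤t} ‖B(s)‖ and N_t = sup_{0≤s≤t} ‖f(s)‖, one has ‖w_n(t)‖ ≤ M^(n+1) · K_t^n · N_t · e^(ωt) · t^((n+1)α)/Γ((n+1)α + 1). -/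

import Mathlib

/-! The bound is governed by the Riemann–Liouville kernel `g_a(τ) = τ^(a-1)/Γ(a)`, whose
semigroup law `∫₀ᵗ g_a(s) g_b(t-s) ds = g_(a+b)(t)` is the Beta integral. The hypothesis on `T`
reads `‖T τ‖ ≤ M e^(ωτ) g_α(τ)`, and since the exponential weights multiply to `e^(ωs)`, one
convolution with `T` turns a bound `D e^(ωu) g_β(u)` into `M D e^(ωs) g_(α+β)(s)`. Starting from
`‖f‖ ≤ N_t = N_t g_1 ≤ N_t e^(ωu)` and losing a factor `K_t` to `B` at each step gives
`M^(n+1) K_t^n N_t e^(ωt) g_((n+1)α+1)(t)`. The suprema are finite by compactness and, for `B`,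
by the uniform boundedness principle. -/

open MeasureTheory Set

theorem integral_rpow_mul_sub_rpow {a b t : ℝ} (ha : 0 < a) (hb : 0 < b) (ht : 0 < t) :
    ∫ s in (0:ℝ)..t, s ^ (a - 1) * (t - s) ^ (b - 1) =
      t ^ (a + b - 1) * (Real.Gamma a * Real.Gamma b / Real.Gamma (a + b)) := by
  have h := Complex.betaIntegral_scaled a b ht
  rw [Complex.betaIntegral_eq_Gamma_mul_div _ _ (by simpa) (by simpa)] at h
  apply Complex.ofReal_injective
  rw [← intervalIntegral.integral_ofReal]
  convert h using 1
  · refine intervalIntegral.integral_congr fun s hs => ?_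
    rw [uIcc_of_le ht.le] at hs
    simp only [Complex.ofReal_mul, Complex.ofReal_cpow hs.1,
      Complex.ofReal_cpow (sub_nonneg.2 hs.2)]
    push_cast; rfl
  · rw [Complex.ofReal_mul, Complex.ofReal_cpow ht.le]
    push_cast [← Complex.Gamma_ofReal]; rfl

noncomputable def riemannLiouvilleKernel (a τ : ℝ) : ℝ := τ ^ (a - 1) / Real.Gamma a

namespace riemannLiouvilleKernel

theorem one_left (τ : ℝ) : riemannLiouvilleKernel 1 τ = 1 := by
  simp [riemannLiouvilleKernel]

theorem zero_right {a : ℝ} (ha : 1 < a) : riemannLiouvilleKernel a 0 = 0 := by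
  simp [riemannLiouvilleKernel, Real.zero_rpow (sub_ne_zero.2 ha.ne')]

theorem continuous {a : ℝ} (ha : 1 ≤ a) : Continuous (riemannLiouvilleKernel a) :=
  (Real.continuous_rpow_const (sub_nonneg.2 ha)).div_const _

theorem integral_mul_sub {a b t : ℝ} (ha : 0 < a) (hb : 0 < b) (ht : 0 < t) :
    ∫ s in (0:ℝ)..t, riemannLiouvilleKernel a s * riemannLiouvilleKernel b (t - s) =
      riemannLiouvilleKernel (a + b) t := by
  have hΓ : ∀ c, 0 < c → Real.Gamma c ≠ 0 := fun c hc => (Real.Gamma_pos_of_pos hc).ne'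
  simp only [riemannLiouvilleKernel, div_mul_div_comm, intervalIntegral.integral_div,
    integral_rpow_mul_sub_rpow ha hb ht]
  field_simp [hΓ a ha, hΓ b hb, hΓ (a + b) (add_pos ha hb)]

end riemannLiouvilleKernel

open riemannLiouvilleKernel in
theorem norm_integral_convolution_le {E F : Type*} [NormedAddCommGroup E] [NormedSpace ℝ E]
    [NormedAddCommGroup F] [NormedSpace ℝ F] {T : ℝ → E →L[ℝ] F} {v : ℝ → E}
    {a b A D ω s : ℝ} (ha : 1 ≤ a) (hb : 1 ≤ b) (hs : 0 ≤ s)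
    (hT : ∀ τ ∈ Icc 0 s, ‖T τ‖ ≤ A * Real.exp (ω * τ) * riemannLiouvilleKernel a τ)
    (hv : ∀ u ∈ Icc 0 s, ‖v u‖ ≤ D * Real.exp (ω * u) * riemannLiouvilleKernel b u) :
    ‖∫ u in (0:ℝ)..s, T (s - u) (v u)‖ ≤
      A * D * Real.exp (ω * s) * riemannLiouvilleKernel (a + b) s := by
  rcases hs.eq_or_lt with rfl | hs
  · simp [zero_right (by linarith : 1 < a + b)]
  have hpt : ∀ u ∈ Ioc 0 s, ‖T (s - u) (v u)‖ ≤ A * D * Real.exp (ω * s) *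
      (riemannLiouvilleKernel b u * riemannLiouvilleKernel a (s - u)) := by
    intro u hu
    have hTu := hT (s - u) ⟨sub_nonneg.2 hu.2, by linarith [hu.1]⟩
    have hexp : Real.exp (ω * s) = Real.exp (ω * (s - u)) * Real.exp (ω * u) := by
      rw [← Real.exp_add]; ring_nf
    calc ‖T (s - u) (v u)‖ ≤ ‖T (s - u)‖ * ‖v u‖ := (T (s - u)).le_opNorm (v u)
      _ ≤ (A * Real.exp (ω * (s - u)) * riemannLiouvilleKernel a (s - u)) *
            (D * Real.exp (ω * u) * riemannLiouvilleKernel b u) :=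
          mul_le_mul hTu (hv u (Ioc_subset_Icc_self hu)) (norm_nonneg _)
            ((norm_nonneg _).trans hTu)
      _ = _ := by rw [hexp]; ring
  have hcont : Continuous fun u => A * D * Real.exp (ω * s) *
      (riemannLiouvilleKernel b u * riemannLiouvilleKernel a (s - u)) :=
    continuous_const.mul ((continuous hb).mul ((continuous ha).comp (continuous_sub_left s)))
  calc _ ≤ ∫ u in (0:ℝ)..s, A * D * Real.exp (ω * s) *
          (riemannLiouvilleKernel b u * riemannLiouvilleKernel a (s - u)) :=
        intervalIntegral.norm_integral_le_of_norm_le hs.le (Filter.Eventually.of_forall hpt)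
          (hcont.intervalIntegrable 0 s)
    _ = _ := by
        rw [intervalIntegral.integral_const_mul, integral_mul_sub (by linarith) (by linarith) hs,
          add_comm]

theorem IsCompact.bddAbove_image_norm_of_continuousOn_apply {𝕜 α E F : Type*}
    [NontriviallyNormedField 𝕜] [NormedAddCommGroup E] [NormedSpace 𝕜 E] [CompleteSpace E]
    [NormedAddCommGroup F] [NormedSpace 𝕜 F] [TopologicalSpace α] {K : Set α} (hK : IsCompact K)
    {B : α → E →L[𝕜] F} (hB : ∀ x, ContinuousOn (fun t => B t x) K) :
    BddAbove ((fun t => ‖B t‖) '' K) := by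
  obtain ⟨C, hC⟩ := banach_steinhaus (g := fun t : K => B t) fun x =>
    ((hK.image_of_continuousOn (hB x)).isBounded.exists_norm_le).imp
      fun C hC t => hC _ (mem_image_of_mem _ t.2)
  exact ⟨C, forall_mem_image.2 fun t ht => hC ⟨t, ht⟩⟩

open riemannLiouvilleKernel in
theorem norm_iterate_le {E : Type*} [NormedAddCommGroup E] [NormedSpace ℝ E]
    {T B : ℝ → E →L[ℝ] E} {f : ℝ → E} {w : ℕ → ℝ → E} {α M ω K N t : ℝ} (hα : 1 ≤ α)
    (hω : 0 ≤ ω) (hT : ∀ τ ∈ Icc 0 t, ‖T τ‖ ≤ M * Real.exp (ω * τ) * riemannLiouvilleKernel α τ)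
    (hB : ∀ s ∈ Icc 0 t, ‖B s‖ ≤ K) (hf : ∀ s ∈ Icc 0 t, ‖f s‖ ≤ N)
    (hw0 : ∀ s, w 0 s = ∫ u in (0:ℝ)..s, T (s - u) (f u))
    (hrec : ∀ n s, w (n + 1) s = ∫ u in (0:ℝ)..s, T (s - u) (B u (w n u))) (n : ℕ) {s : ℝ}
    (hs : s ∈ Icc 0 t) :
    ‖w n s‖ ≤ M ^ (n + 1) * K ^ n * N * Real.exp (ω * s) *
      riemannLiouvilleKernel ((n + 1) * α + 1) s := by
  have hTs : ∀ τ ∈ Icc 0 s, ‖T τ‖ ≤ M * Real.exp (ω * τ) * riemannLiouvilleKernel α τ :=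
    fun τ hτ => hT τ (Icc_subset_Icc_right hs.2 hτ)
  induction n generalizing s with
  | zero =>
    have hfs : ∀ u ∈ Icc 0 s, ‖f u‖ ≤ N * Real.exp (ω * u) * riemannLiouvilleKernel 1 u := by
      intro u hu
      have hN := hf u (Icc_subset_Icc_right hs.2 hu)
      rw [one_left, mul_one]
      exact hN.trans (le_mul_of_one_le_right ((norm_nonneg _).trans hN)
        (Real.one_le_exp (mul_nonneg hω hu.1)))
    rw [hw0]
    simpa using norm_integral_convolution_le hα le_rfl hs.1 hTs hfs
  | succ m ih =>
    have hv : ∀ u ∈ Icc 0 s, ‖B u (w m u)‖ ≤ M ^ (m + 1) * K ^ (m + 1) * N *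
        Real.exp (ω * u) * riemannLiouvilleKernel ((m + 1) * α + 1) u := by
      intro u hu
      have hut := Icc_subset_Icc_right hs.2 hu
      calc ‖B u (w m u)‖ ≤ ‖B u‖ * ‖w m u‖ := (B u).le_opNorm _
        _ ≤ K * (M ^ (m + 1) * K ^ m * N * Real.exp (ω * u) *
              riemannLiouvilleKernel ((m + 1) * α + 1) u) :=
          mul_le_mul (hB u hut) (ih hut fun τ hτ => hT τ (Icc_subset_Icc_right hut.2 hτ))
            (norm_nonneg _) ((norm_nonneg _).trans (hB u hut))
        _ = _ := by ring
    rw [hrec]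
    refine (norm_integral_convolution_le hα (by nlinarith) hs.1 hTs hv).trans_eq ?_
    rw [show α + ((m + 1) * α + 1) = ((m + 1 : ℕ) + 1) * α + 1 by push_cast; ring]
    ring

theorem particular_solution_iterate_bound_general {X : Type*} [NormedAddCommGroup X]
    [NormedSpace ℝ X] [CompleteSpace X]
    (α M ω : ℝ) (hα1 : 1 < α) (hω : 0 ≤ ω)
    (T B : ℝ → X →L[ℝ] X) (f : ℝ → X) (w : ℕ → ℝ → X)
    (hBcont : ∀ x : X, ContinuousOn (fun t => B t x) (Set.Ici 0))
    (hTbd : ∀ t : ℝ, 0 ≤ t → ‖T t‖ ≤ M * Real.exp (ω * t) * t ^ (α - 1) / Real.Gamma α)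
    (hf : ContinuousOn f (Set.Ici 0))
    (hw0 : ∀ t : ℝ, w 0 t = ∫ s in (0:ℝ)..t, T (t - s) (f s))
    (hrec : ∀ (n : ℕ) (t : ℝ),
      w (n + 1) t = ∫ s in (0:ℝ)..t, T (t - s) (B s (w n s)))
    (n : ℕ) (t : ℝ) (ht : 0 ≤ t) :
    ‖w n t‖ ≤ M ^ (n + 1) * (sSup ((fun s => ‖B s‖) '' Set.Icc 0 t)) ^ n *
      (sSup ((fun s => ‖f s‖) '' Set.Icc 0 t)) * Real.exp (ω * t) *
      (t ^ (((n : ℝ) + 1) * α) / Real.Gamma (((n : ℝ) + 1) * α + 1)) := by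
  have hBbdd : BddAbove ((fun s => ‖B s‖) '' Icc 0 t) :=
    isCompact_Icc.bddAbove_image_norm_of_continuousOn_apply fun x =>
      (hBcont x).mono Icc_subset_Ici_self
  have hfbdd : BddAbove ((fun s => ‖f s‖) '' Icc 0 t) :=
    isCompact_Icc.bddAbove_image (hf.mono Icc_subset_Ici_self).norm
  have key := norm_iterate_le hα1.le hω (fun τ hτ => (hTbd τ hτ.1).trans_eq (mul_div_assoc _ _ _))
    (fun s hs => le_csSup hBbdd (mem_image_of_mem _ hs))
    (fun s hs => le_csSup hfbdd (mem_image_of_mem _ hs)) hw0 hrec n ⟨ht, le_rfl⟩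
  rwa [riemannLiouvilleKernel, add_sub_cancel_right] at key

/-- Bound on the iterates of the particular solution of the perturbed inhomogeneous
fractional evolution equation:
`‖w_n(t)‖ ≤ M^{n+1} K_t^n N_t e^{ωt} t^{(n+1)α}/Γ((n+1)α+1)`. -/
theorem particular_solution_iterate_bound {X : Type*} [NormedAddCommGroup X]
    [NormedSpace ℝ X] [CompleteSpace X]
    (α M ω : ℝ) (hα1 : 1 < α) (hα2 : α ≤ 2) (hM : 1 ≤ M) (hω : 0 ≤ ω)
    (T B : ℝ → X →L[ℝ] X) (f : ℝ → X) (w : ℕ → ℝ → X)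
    (hTcont : ∀ x : X, ContinuousOn (fun t => T t x) (Set.Ici 0))
    (hBcont : ∀ x : X, ContinuousOn (fun t => B t x) (Set.Ici 0))
    (hTbd : ∀ t : ℝ, 0 ≤ t → ‖T t‖ ≤ M * Real.exp (ω * t) * t ^ (α - 1) / Real.Gamma α)
    (hf : ContinuousOn f (Set.Ici 0))
    (hw0 : ∀ t : ℝ, w 0 t = ∫ s in (0:ℝ)..t, T (t - s) (f s))
    (hrec : ∀ (n : ℕ) (t : ℝ),
      w (n + 1) t = ∫ s in (0:ℝ)..t, T (t - s) (B s (w n s)))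
    (n : ℕ) (t : ℝ) (ht : 0 ≤ t) :
    ‖w n t‖ ≤ M ^ (n + 1) * (sSup ((fun s => ‖B s‖) '' Set.Icc 0 t)) ^ n *
      (sSup ((fun s => ‖f s‖) '' Set.Icc 0 t)) * Real.exp (ω * t) *
      (t ^ (((n : ℝ) + 1) * α) / Real.Gamma (((n : ℝ) + 1) * α + 1)) :=
  particular_solution_iterate_bound_general α M ω hα1 hω T B f w hBcont hTbd hf hw0 hrec n t ht
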